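/- arXiv:1810.03139 — 5 statements merged into one kernel-verified Lean document; each statement's English description precedes it below -/
import Mathlib

section
/- Two persistence modules at interleaving distance zero are isomorphic: if V and W are persistence modules over F with d_int(V, W) = 0, then there exist morphisms of persistence modules φ : V → W and ψ : W → V with ψ_s ∘ φ_s = id_{V_s} and φ_s ∘ ψ_s = id_{W_s} for every s ∈ ℝ. -/
open scoped ENNReal

/-- A persistence module over a field `F`: a family of `F`-vector spaces indexed by `ℝ`
with structure maps, a finite spectrum outside of which the structure maps are
isomorphisms, and left-continuity. -/
structure PersistenceModule (F : Type) [Field F] where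
  space : ℝ → Type
  [acg : ∀ s : ℝ, AddCommGroup (space s)]
  [mod : ∀ s : ℝ, Module F (space s)]
  map : ∀ s t : ℝ, s ≤ t → space s →ₗ[F] space t
  map_id : ∀ s : ℝ, map s s le_rfl = LinearMap.id
  map_comp : ∀ (s t u : ℝ) (h1 : s ≤ t) (h2 : t ≤ u),
    (map t u h2).comp (map s t h1) = map s u (h1.trans h2)
  spectrum : Finset ℝ
  iso_off_spectrum : ∀ (s t : ℝ) (h : s ≤ t),
    (∀ x ∈ Set.Icc s t, x ∉ spectrum) → Function.Bijective (map s t h)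
  left_continuous : ∀ t : ℝ, ∃ ε > (0 : ℝ), ∀ (s : ℝ) (hst : s < t), t - ε < s →
    Function.Bijective (map s t hst.le)

attribute [instance] PersistenceModule.acg PersistenceModule.mod

variable {F : Type} [Field F]

/-- An `ε`-interleaving between two persistence modules. -/
def IsInterleaving (V W : PersistenceModule F) (ε : ℝ) : Prop :=
  ∃ (φ : ∀ s : ℝ, V.space s →ₗ[F] W.space (s + ε))
    (ψ : ∀ s : ℝ, W.space s →ₗ[F] V.space (s + ε)),
    (∀ (s t : ℝ) (h : s ≤ t),
      (W.map (s + ε) (t + ε) (by linarith)).comp (φ s) = (φ t).comp (V.map s t h)) ∧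
    (∀ (s t : ℝ) (h : s ≤ t),
      (V.map (s + ε) (t + ε) (by linarith)).comp (ψ s) = (ψ t).comp (W.map s t h)) ∧
    (∀ (s : ℝ) (h : s ≤ s + ε + ε), (ψ (s + ε)).comp (φ s) = V.map s (s + ε + ε) h) ∧
    (∀ (s : ℝ) (h : s ≤ s + ε + ε), (φ (s + ε)).comp (ψ s) = W.map s (s + ε + ε) h)

/-- The interleaving distance between two persistence modules, with values in `[0, ∞]`. -/
noncomputable def dInt (V W : PersistenceModule F) : ℝ≥0∞ :=
  sInf (ENNReal.ofReal '' {ε : ℝ | 0 < ε ∧ IsInterleaving V W ε})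

section Aux

variable {F : Type} [Field F]

/-- Inverse of a linear map, junk value `0` if not bijective. -/
noncomputable def linInv {M N : Type} [AddCommGroup M] [AddCommGroup N] [Module F M]
    [Module F N] (f : M →ₗ[F] N) : N →ₗ[F] M :=
  letI := Classical.propDecidable
  if h : Function.Bijective f then ((LinearEquiv.ofBijective f h).symm : N →ₗ[F] M) else 0

lemma linInv_right {M N : Type} [AddCommGroup M] [AddCommGroup N] [Module F M]
    [Module F N] (f : M →ₗ[F] N) (h : Function.Bijective f) (y : N) :
    f (linInv f y) = y := by
  unfold linInv
  rw [dif_pos h]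
  exact (LinearEquiv.ofBijective f h).apply_symm_apply y

lemma linInv_eq {M N : Type} [AddCommGroup M] [AddCommGroup N] [Module F M]
    [Module F N] (f : M →ₗ[F] N) (h : Function.Bijective f) {x : M} {y : N}
    (hxy : f x = y) : linInv f y = x := by
  apply h.injective
  rw [linInv_right f h]
  exact hxy.symm

lemma map_trans (V : PersistenceModule F) {a b c : ℝ} (h1 : a ≤ b) (h2 : b ≤ c)
    (x : V.space a) : V.map b c h2 (V.map a b h1 x) = V.map a c (h1.trans h2) x := by
  have := LinearMap.congr_fun (V.map_comp a b c h1 h2) x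
  simpa using this

lemma map_self (V : PersistenceModule F) {s : ℝ} (h : s ≤ s) (x : V.space s) :
    V.map s s h x = x := by
  have := LinearMap.congr_fun (V.map_id s) x
  simpa using this

lemma bij_icoT (V : PersistenceModule F) (T : Finset ℝ) (hTV : ∀ x ∈ V.spectrum, x ∈ T)
    (s t : ℝ) (hst : s ≤ t) (hI : ∀ x ∈ Set.Ico s t, x ∉ T) :
    Function.Bijective (V.map s t hst) := by
  rcases eq_or_lt_of_le hst with rfl | hlt
  · have h0 : V.map s s hst = LinearMap.id := V.map_id s
    rw [h0]; exact Function.bijective_id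
  · obtain ⟨δ, hδ, hcont⟩ := V.left_continuous t
    have hsu : s ≤ max s (t - δ/2) := le_max_left _ _
    have hut : max s (t - δ/2) < t := max_lt hlt (by linarith)
    have h1 : Function.Bijective (V.map s _ hsu) :=
      V.iso_off_spectrum s _ hsu
        (fun x hx hxV => hI x ⟨hx.1, lt_of_le_of_lt hx.2 hut⟩ (hTV x hxV))
    have h2 : Function.Bijective (V.map _ t hut.le) :=
      hcont _ hut (lt_of_lt_of_le (by linarith) (le_max_right _ _))
    have h3 : V.map s t hst = (V.map _ t hut.le).comp (V.map s _ hsu) :=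
      (V.map_comp s _ t hsu hut.le).symm
    rw [h3, LinearMap.coe_comp]
    exact h2.comp h1

/-- The candidate isomorphism at `s`, defined by transporting to a reference point `k`. -/
noncomputable def theta (V W : PersistenceModule F) (ε : ℝ) (hε : 0 < ε)
    (φ : ∀ s : ℝ, V.space s →ₗ[F] W.space (s + ε)) (s k : ℝ) (hsk : s ≤ k) :
    V.space s →ₗ[F] W.space s :=
  (linInv (W.map s k hsk)).comp
    (((W.map (k - ε + ε) k (by linarith)).comp
      ((φ (k - ε)).comp (linInv (V.map (k - ε) k (by linarith))))).comp (V.map s k hsk))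

lemma theta_apply (V W : PersistenceModule F) (ε : ℝ) (hε : 0 < ε)
    (φ : ∀ s : ℝ, V.space s →ₗ[F] W.space (s + ε)) (s k : ℝ) (hsk : s ≤ k)
    (x : V.space s) :
    theta V W ε hε φ s k hsk x =
      linInv (W.map s k hsk) (W.map (k - ε + ε) k (by linarith)
        (φ (k - ε) (linInv (V.map (k - ε) k (by linarith)) (V.map s k hsk x)))) := rfl

end Aux
section Aux2

variable {F : Type} [Field F]

lemma theta_indep (V W : PersistenceModule F) (T : Finset ℝ) (ε : ℝ) (hε : 0 < ε)
    (hTV : ∀ x ∈ V.spectrum, x ∈ T) (hTW : ∀ x ∈ W.spectrum, x ∈ T)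
    (φ : ∀ s : ℝ, V.space s →ₗ[F] W.space (s + ε))
    (hφnat : ∀ (s t : ℝ) (h : s ≤ t),
      (W.map (s + ε) (t + ε) (by linarith)).comp (φ s) = (φ t).comp (V.map s t h))
    (s k₁ k₂ : ℝ) (h1 : s ≤ k₁) (h2 : k₁ ≤ k₂)
    (hG1 : ∀ x ∈ Set.Ico (k₁ - 2*ε) k₁, x ∉ T)
    (hG2 : ∀ x ∈ Set.Ico (k₂ - 2*ε) k₂, x ∉ T)
    (hI : ∀ x ∈ Set.Ico s k₂, x ∉ T) (x : V.space s) :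
    theta V W ε hε φ s k₁ h1 x = theta V W ε hε φ s k₂ (h1.trans h2) x := by
  have bW2 : Function.Bijective (W.map s k₂ (h1.trans h2)) := bij_icoT W T hTW s k₂ _ hI
  have bW1 : Function.Bijective (W.map s k₁ h1) :=
    bij_icoT W T hTW s k₁ h1 (fun y hy => hI y ⟨hy.1, lt_of_lt_of_le hy.2 h2⟩)
  have bV1 : Function.Bijective (V.map (k₁ - ε) k₁ (by linarith)) :=
    bij_icoT V T hTV _ _ _ (fun y hy => hG1 y ⟨by linarith [hy.1], hy.2⟩)
  have bV2 : Function.Bijective (V.map (k₂ - ε) k₂ (by linarith)) :=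
    bij_icoT V T hTV _ _ _ (fun y hy => hG2 y ⟨by linarith [hy.1], hy.2⟩)
  apply bW2.injective
  rw [theta_apply, theta_apply, linInv_right _ bW2]
  rw [← map_trans W h1 h2, linInv_right _ bW1]
  rw [map_trans W (by linarith : k₁ - ε + ε ≤ k₁) h2]
  rw [← map_trans W (by linarith : k₁ - ε + ε ≤ k₂ - ε + ε) (by linarith : k₂ - ε + ε ≤ k₂)]
  have hn := LinearMap.congr_fun (hφnat (k₁ - ε) (k₂ - ε) (by linarith))
    (linInv (V.map (k₁ - ε) k₁ (by linarith)) (V.map s k₁ h1 x))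
  simp only [LinearMap.comp_apply] at hn
  rw [hn]
  congr 1
  congr 1
  refine (linInv_eq _ bV2 ?_).symm
  rw [map_trans V (by linarith : k₁ - ε ≤ k₂ - ε) (by linarith : k₂ - ε ≤ k₂)]
  rw [← map_trans V (by linarith : k₁ - ε ≤ k₁) h2, linInv_right _ bV1]
  rw [map_trans V h1 h2]

end Aux2
section Aux3

variable {F : Type} [Field F]

lemma theta_commonk (V W : PersistenceModule F) (T : Finset ℝ) (ε : ℝ) (hε : 0 < ε)
    (hTV : ∀ x ∈ V.spectrum, x ∈ T) (hTW : ∀ x ∈ W.spectrum, x ∈ T)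
    (φ : ∀ s : ℝ, V.space s →ₗ[F] W.space (s + ε))
    (s t k : ℝ) (hst : s ≤ t) (htk : t ≤ k)
    (hI : ∀ x ∈ Set.Ico s k, x ∉ T) (x : V.space s) :
    W.map s t hst (theta V W ε hε φ s k (hst.trans htk) x) =
      theta V W ε hε φ t k htk (V.map s t hst x) := by
  have bWs : Function.Bijective (W.map s k (hst.trans htk)) := bij_icoT W T hTW s k _ hI
  have bWt : Function.Bijective (W.map t k htk) :=
    bij_icoT W T hTW t k htk (fun y hy => hI y ⟨hst.trans hy.1, hy.2⟩)
  apply bWt.injective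
  rw [theta_apply, theta_apply, linInv_right _ bWt]
  rw [map_trans W hst htk, linInv_right _ bWs]
  rw [map_trans V hst htk]

lemma theta_nat_good (V W : PersistenceModule F) (T : Finset ℝ) (ε : ℝ) (hε : 0 < ε)
    (hTV : ∀ x ∈ V.spectrum, x ∈ T) (hTW : ∀ x ∈ W.spectrum, x ∈ T)
    (φ : ∀ s : ℝ, V.space s →ₗ[F] W.space (s + ε))
    (hφnat : ∀ (s t : ℝ) (h : s ≤ t),
      (W.map (s + ε) (t + ε) (by linarith)).comp (φ s) = (φ t).comp (V.map s t h))
    (g : ℝ → ℝ) (hg1 : ∀ s, s ≤ g s)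
    (hg2 : ∀ s, ∀ x ∈ Set.Ico s (g s), x ∉ T)
    (hg3 : ∀ s, ∀ x ∈ Set.Ico (g s - 2*ε) (g s), x ∉ T)
    (s t : ℝ) (hst : s ≤ t)
    (hGs : ∀ x ∈ Set.Ico (s - 2*ε) s, x ∉ T) (x : V.space s) :
    W.map s t hst (theta V W ε hε φ s (g s) (hg1 s) x) =
      theta V W ε hε φ t (g t) (hg1 t) (V.map s t hst x) := by
  -- replace the reference point g s by s itself
  have hind := theta_indep V W T ε hε hTV hTW φ hφnat s s (g s) le_rfl (hg1 s)
    hGs (hg3 s) (hg2 s) x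
  rw [← hind]
  have hsh : s ≤ g t := hst.trans (hg1 t)
  have bWth : Function.Bijective (W.map t (g t) (hg1 t)) := bij_icoT W T hTW t _ _ (hg2 t)
  have bWss : Function.Bijective (W.map s s le_rfl) :=
    bij_icoT W T hTW s s le_rfl (fun y hy => absurd hy.2 (not_lt.2 hy.1))
  have bVs : Function.Bijective (V.map (s - ε) s (by linarith)) :=
    bij_icoT V T hTV _ _ _ (fun y hy => hGs y ⟨by linarith [hy.1], hy.2⟩)
  have bVh : Function.Bijective (V.map (g t - ε) (g t) (by linarith)) :=
    bij_icoT V T hTV _ _ _ (fun y hy => hg3 t y ⟨by linarith [hy.1], hy.2⟩)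
  apply bWth.injective
  rw [theta_apply, theta_apply, linInv_right _ bWth]
  rw [map_trans W hst (hg1 t)]
  rw [← map_trans W (le_refl s) hsh, linInv_right _ bWss]
  rw [map_trans W (by linarith : s - ε + ε ≤ s) hsh]
  rw [← map_trans W (by linarith : s - ε + ε ≤ g t - ε + ε) (by linarith : g t - ε + ε ≤ g t)]
  have hn := LinearMap.congr_fun (hφnat (s - ε) (g t - ε) (by linarith))
    (linInv (V.map (s - ε) s (by linarith)) (V.map s s le_rfl x))
  simp only [LinearMap.comp_apply] at hn
  rw [hn]
  congr 2
  refine (linInv_eq _ bVh ?_).symm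
  rw [map_trans V (by linarith : s - ε ≤ g t - ε) (by linarith : g t - ε ≤ g t)]
  rw [← map_trans V (by linarith : s - ε ≤ s) hsh, linInv_right _ bVs]
  rw [map_trans V le_rfl hsh, map_trans V hst (hg1 t)]

end Aux3
section Aux4

variable {F : Type} [Field F]

lemma linInv_left {M N : Type} [AddCommGroup M] [AddCommGroup N] [Module F M]
    [Module F N] (f : M →ₗ[F] N) (h : Function.Bijective f) (x : M) :
    linInv f (f x) = x := linInv_eq f h rfl

lemma theta_nat_flat (V W : PersistenceModule F) (T : Finset ℝ) (ε : ℝ) (hε : 0 < ε)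
    (hTV : ∀ x ∈ V.spectrum, x ∈ T) (hTW : ∀ x ∈ W.spectrum, x ∈ T)
    (φ : ∀ s : ℝ, V.space s →ₗ[F] W.space (s + ε))
    (hφnat : ∀ (s t : ℝ) (h : s ≤ t),
      (W.map (s + ε) (t + ε) (by linarith)).comp (φ s) = (φ t).comp (V.map s t h))
    (g : ℝ → ℝ) (hg1 : ∀ s, s ≤ g s)
    (hg2 : ∀ s, ∀ x ∈ Set.Ico s (g s), x ∉ T)
    (hg3 : ∀ s, ∀ x ∈ Set.Ico (g s - 2*ε) (g s), x ∉ T)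
    (s t : ℝ) (hst : s ≤ t)
    (hI : ∀ x ∈ Set.Ico s t, x ∉ T) (x : V.space s) :
    W.map s t hst (theta V W ε hε φ s (g s) (hg1 s) x) =
      theta V W ε hε φ t (g t) (hg1 t) (V.map s t hst x) := by
  set k := max (g s) (g t) with hk
  have hgsk : g s ≤ k := le_max_left _ _
  have hgtk : g t ≤ k := le_max_right _ _
  have htk : t ≤ k := (hg1 t).trans hgtk
  have hGk : ∀ x ∈ Set.Ico (k - 2*ε) k, x ∉ T := by
    rcases max_choice (g s) (g t) with hc | hc
    · rw [hk, hc]; exact hg3 s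
    · rw [hk, hc]; exact hg3 t
  have hIsk : ∀ y ∈ Set.Ico s k, y ∉ T := by
    intro y hy
    rcases lt_or_ge y t with hyt | hyt
    · exact hI y ⟨hy.1, hyt⟩
    · rcases max_choice (g s) (g t) with hc | hc
      · exact hg2 s y ⟨hy.1, by rw [hk, hc] at hy; exact hy.2⟩
      · exact hg2 t y ⟨hyt, by rw [hk, hc] at hy; exact hy.2⟩
  have hItk : ∀ y ∈ Set.Ico t k, y ∉ T := fun y hy => hIsk y ⟨hst.trans hy.1, hy.2⟩
  rw [theta_indep V W T ε hε hTV hTW φ hφnat s (g s) k (hg1 s) hgsk (hg3 s) hGk hIsk x]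
  rw [theta_commonk V W T ε hε hTV hTW φ s t k hst htk hIsk x]
  rw [theta_indep V W T ε hε hTV hTW φ hφnat t (g t) k (hg1 t) hgtk (hg3 t) hGk hItk]

lemma theta_nat (V W : PersistenceModule F) (T : Finset ℝ) (ε : ℝ) (hε : 0 < ε)
    (hTV : ∀ x ∈ V.spectrum, x ∈ T) (hTW : ∀ x ∈ W.spectrum, x ∈ T)
    (hgap : ∀ a ∈ T, ∀ b ∈ T, a < b → 4*ε < b - a)
    (φ : ∀ s : ℝ, V.space s →ₗ[F] W.space (s + ε))
    (hφnat : ∀ (s t : ℝ) (h : s ≤ t),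
      (W.map (s + ε) (t + ε) (by linarith)).comp (φ s) = (φ t).comp (V.map s t h))
    (g : ℝ → ℝ) (hg1 : ∀ s, s ≤ g s)
    (hg2 : ∀ s, ∀ x ∈ Set.Ico s (g s), x ∉ T)
    (hg3 : ∀ s, ∀ x ∈ Set.Ico (g s - 2*ε) (g s), x ∉ T)
    (s t : ℝ) (hst : s ≤ t) (x : V.space s) :
    W.map s t hst (theta V W ε hε φ s (g s) (hg1 s) x) =
      theta V W ε hε φ t (g t) (hg1 t) (V.map s t hst x) := by
  by_cases hGs : ∀ y ∈ Set.Ico (s - 2*ε) s, y ∉ T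
  · exact theta_nat_good V W T ε hε hTV hTW φ hφnat g hg1 hg2 hg3 s t hst hGs x
  · push_neg at hGs
    obtain ⟨a, ha, haT⟩ := hGs
    have has : a < s := ha.2
    have has2 : s - 2*ε ≤ a := ha.1
    by_cases hta : t ≤ a + 4*ε
    · refine theta_nat_flat V W T ε hε hTV hTW φ hφnat g hg1 hg2 hg3 s t hst ?_ x
      intro y hy hyT
      have h1 : a < y := lt_of_lt_of_le has hy.1
      have h2 := hgap a haT y hyT h1
      have : y < a + 4*ε := lt_of_lt_of_le hy.2 hta
      linarith
    · push_neg at hta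
      have hsm : s ≤ a + 4*ε := by linarith
      have hmt : a + 4*ε ≤ t := hta.le
      have hIm : ∀ y ∈ Set.Ico s (a + 4*ε), y ∉ T := by
        intro y hy hyT
        have h1 : a < y := lt_of_lt_of_le has hy.1
        have h2 := hgap a haT y hyT h1
        linarith [hy.2]
      have hGm : ∀ y ∈ Set.Ico (a + 4*ε - 2*ε) (a + 4*ε), y ∉ T := by
        intro y hy hyT
        have h1 : a < y := by linarith [hy.1]
        have h2 := hgap a haT y hyT h1
        linarith [hy.2]
      have N1 := theta_nat_flat V W T ε hε hTV hTW φ hφnat g hg1 hg2 hg3 s (a + 4*ε) hsm hIm x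
      have N2 := theta_nat_good V W T ε hε hTV hTW φ hφnat g hg1 hg2 hg3 (a + 4*ε) t hmt hGm
        (V.map s (a + 4*ε) hsm x)
      rw [← map_trans W hsm hmt, N1, N2, map_trans V hsm hmt]

lemma theta_inv (V W : PersistenceModule F) (T : Finset ℝ) (ε : ℝ) (hε : 0 < ε)
    (hTV : ∀ x ∈ V.spectrum, x ∈ T) (hTW : ∀ x ∈ W.spectrum, x ∈ T)
    (φ : ∀ s : ℝ, V.space s →ₗ[F] W.space (s + ε))
    (ψ : ∀ s : ℝ, W.space s →ₗ[F] V.space (s + ε))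
    (hφnat : ∀ (s t : ℝ) (h : s ≤ t),
      (W.map (s + ε) (t + ε) (by linarith)).comp (φ s) = (φ t).comp (V.map s t h))
    (hψnat : ∀ (s t : ℝ) (h : s ≤ t),
      (V.map (s + ε) (t + ε) (by linarith)).comp (ψ s) = (ψ t).comp (W.map s t h))
    (hψφ : ∀ (s : ℝ) (h : s ≤ s + ε + ε), (ψ (s + ε)).comp (φ s) = V.map s (s + ε + ε) h)
    (g : ℝ → ℝ) (hg1 : ∀ s, s ≤ g s)
    (hg2 : ∀ s, ∀ x ∈ Set.Ico s (g s), x ∉ T)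
    (hg3 : ∀ s, ∀ x ∈ Set.Ico (g s - 2*ε) (g s), x ∉ T)
    (s : ℝ) (x : V.space s) :
    theta W V ε hε ψ s (g s) (hg1 s) (theta V W ε hε φ s (g s) (hg1 s) x) = x := by
  have bVsg : Function.Bijective (V.map s (g s) (hg1 s)) := bij_icoT V T hTV _ _ _ (hg2 s)
  have bWsg : Function.Bijective (W.map s (g s) (hg1 s)) := bij_icoT W T hTW _ _ _ (hg2 s)
  have bVg : Function.Bijective (V.map (g s - ε) (g s) (by linarith)) :=
    bij_icoT V T hTV _ _ _ (fun y hy => hg3 s y ⟨by linarith [hy.1], hy.2⟩)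
  have bWg : Function.Bijective (W.map (g s - ε) (g s) (by linarith)) :=
    bij_icoT W T hTW _ _ _ (fun y hy => hg3 s y ⟨by linarith [hy.1], hy.2⟩)
  have bV2 : Function.Bijective (V.map (g s - 2*ε) (g s - ε) (by linarith)) :=
    bij_icoT V T hTV _ _ _ (fun y hy => hg3 s y ⟨hy.1, by linarith [hy.2]⟩)
  apply bVsg.injective
  rw [theta_apply, linInv_right _ bVsg, theta_apply, linInv_right _ bWsg]
  rw [show linInv (V.map (g s - ε) (g s) (by linarith)) (V.map s (g s) (hg1 s) x) =
      V.map (g s - 2*ε) (g s - ε) (by linarith)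
        (linInv (V.map (g s - 2*ε) (g s - ε) (by linarith))
          (linInv (V.map (g s - ε) (g s) (by linarith)) (V.map s (g s) (hg1 s) x)))
    from (linInv_right _ bV2 _).symm]
  set v' := linInv (V.map (g s - 2*ε) (g s - ε) (by linarith : g s - 2*ε ≤ g s - ε))
    (linInv (V.map (g s - ε) (g s) (by linarith : g s - ε ≤ g s))
      (V.map s (g s) (hg1 s) x)) with hv'
  have hn := LinearMap.congr_fun (hφnat (g s - 2*ε) (g s - ε) (by linarith)) v'
  simp only [LinearMap.comp_apply] at hn
  rw [← hn]
  rw [map_trans W (by linarith : g s - 2*ε + ε ≤ g s - ε + ε) (by linarith : g s - ε + ε ≤ g s)]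
  rw [← map_trans W (by linarith : g s - 2*ε + ε ≤ g s - ε) (by linarith : g s - ε ≤ g s)]
  rw [linInv_left _ bWg]
  have hm := LinearMap.congr_fun (hψnat (g s - 2*ε + ε) (g s - ε) (by linarith))
    (φ (g s - 2*ε) v')
  simp only [LinearMap.comp_apply] at hm
  rw [← hm]
  have hc := LinearMap.congr_fun (hψφ (g s - 2*ε) (by linarith)) v'
  simp only [LinearMap.comp_apply] at hc
  rw [hc]
  rw [map_trans V (by linarith : g s - 2*ε ≤ g s - 2*ε + ε + ε)
    (by linarith : g s - 2*ε + ε + ε ≤ g s - ε + ε)]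
  rw [map_trans V (by linarith : g s - 2*ε ≤ g s - ε + ε) (by linarith : g s - ε + ε ≤ g s)]
  rw [← map_trans V (by linarith : g s - 2*ε ≤ g s - ε) (by linarith : g s - ε ≤ g s)]
  rw [hv', linInv_right _ bV2, linInv_right _ bVg]

end Aux4

/-- Two persistence modules at interleaving distance zero are isomorphic. -/
theorem stmt1 (F : Type) [Field F] (V W : PersistenceModule F) (h : dInt V W = 0) :
    ∃ (φ : ∀ s : ℝ, V.space s →ₗ[F] W.space s) (ψ : ∀ s : ℝ, W.space s →ₗ[F] V.space s),
      (∀ (s t : ℝ) (hst : s ≤ t), (W.map s t hst).comp (φ s) = (φ t).comp (V.map s t hst)) ∧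
      (∀ (s t : ℝ) (hst : s ≤ t), (V.map s t hst).comp (ψ s) = (ψ t).comp (W.map s t hst)) ∧
      (∀ s : ℝ, (ψ s).comp (φ s) = LinearMap.id) ∧
      (∀ s : ℝ, (φ s).comp (ψ s) = LinearMap.id) := by
  classical
  set T : Finset ℝ := V.spectrum ∪ W.spectrum with hT
  have hTV : ∀ x ∈ V.spectrum, x ∈ T := fun x hx => Finset.mem_union_left _ hx
  have hTW : ∀ x ∈ W.spectrum, x ∈ T := fun x hx => Finset.mem_union_right _ hx
  -- a uniform positive lower bound on gaps between spectrum points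
  obtain ⟨δ, hδpos, hδgap⟩ : ∃ δ : ℝ, 0 < δ ∧ ∀ a ∈ T, ∀ b ∈ T, a < b → δ ≤ b - a := by
    by_cases hne : ((T ×ˢ T).filter fun p => p.1 < p.2).Nonempty
    · refine ⟨((T ×ˢ T).filter fun p => p.1 < p.2).inf' hne (fun p => p.2 - p.1), ?_, ?_⟩
      · refine (Finset.lt_inf'_iff hne).2 ?_
        rintro ⟨a, b⟩ hp
        rw [Finset.mem_filter] at hp
        simpa using sub_pos.2 hp.2
      · intro a ha b hb hab
        have hmem : (a, b) ∈ (T ×ˢ T).filter (fun p => p.1 < p.2) :=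
          Finset.mem_filter.2 ⟨Finset.mem_product.2 ⟨ha, hb⟩, hab⟩
        exact Finset.inf'_le (fun p => p.2 - p.1) hmem
    · refine ⟨1, one_pos, fun a ha b hb hab => ?_⟩
      have hmem : (a, b) ∈ (T ×ˢ T).filter (fun p => p.1 < p.2) :=
        Finset.mem_filter.2 ⟨Finset.mem_product.2 ⟨ha, hb⟩, hab⟩
      exact absurd ⟨(a, b), hmem⟩ hne
  -- pick a small ε with an interleaving
  obtain ⟨ε, hε, hε4, hint⟩ : ∃ ε : ℝ, 0 < ε ∧ 4*ε < δ ∧ IsInterleaving V W ε := by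
    have h0 : sInf (ENNReal.ofReal '' {ε : ℝ | 0 < ε ∧ IsInterleaving V W ε})
        < ENNReal.ofReal (δ/5) := by
      rw [show sInf (ENNReal.ofReal '' {ε : ℝ | 0 < ε ∧ IsInterleaving V W ε}) = 0 from h]
      exact ENNReal.ofReal_pos.2 (by linarith)
    obtain ⟨x, hxmem, hxlt⟩ := sInf_lt_iff.1 h0
    obtain ⟨ε, hεmem, hεeq⟩ := hxmem
    refine ⟨ε, hεmem.1, ?_, hεmem.2⟩
    rw [← hεeq] at hxlt
    have := (ENNReal.ofReal_lt_ofReal_iff (by linarith)).1 hxlt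
    linarith
  have hgap : ∀ a ∈ T, ∀ b ∈ T, a < b → 4*ε < b - a := by
    intro a ha b hb hab
    have := hδgap a ha b hb hab
    linarith
  obtain ⟨φ, ψ, hφnat, hψnat, hψφ, hφψ⟩ := hint
  -- the reference-point function g
  have key : ∀ s : ℝ, ∃ g : ℝ, s ≤ g ∧
      (∀ x ∈ Set.Ico s g, x ∉ T) ∧ (∀ x ∈ Set.Ico (g - 2*ε) g, x ∉ T) := by
    intro s
    by_cases hs : ∃ a ∈ (T : Finset ℝ), a ∈ Set.Ico (s - 2*ε) s
    · obtain ⟨a, haT, ha1, ha2⟩ := hs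
      refine ⟨a + 3*ε, by linarith, ?_, ?_⟩
      · rintro y ⟨hy1, hy2⟩ hyT
        have hay : a < y := lt_of_lt_of_le ha2 hy1
        have := hgap a haT y hyT hay
        linarith
      · rintro y ⟨hy1, hy2⟩ hyT
        have hay : a < y := by linarith
        have := hgap a haT y hyT hay
        linarith
    · exact ⟨s, le_rfl, fun y hy _ => absurd hy.2 (not_lt.2 hy.1),
        fun y hy hyT => hs ⟨y, hyT, hy⟩⟩
  choose g hg1 hg2 hg3 using key
  refine ⟨fun s => theta V W ε hε φ s (g s) (hg1 s),
          fun s => theta W V ε hε ψ s (g s) (hg1 s), ?_, ?_, ?_, ?_⟩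
  · intro s t hst
    ext x
    simp only [LinearMap.comp_apply]
    exact theta_nat V W T ε hε hTV hTW hgap φ hφnat g hg1 hg2 hg3 s t hst x
  · intro s t hst
    ext x
    simp only [LinearMap.comp_apply]
    exact theta_nat W V T ε hε hTW hTV hgap ψ hψnat g hg1 hg2 hg3 s t hst x
  · intro s
    ext x
    simp only [LinearMap.comp_apply, LinearMap.id_apply]
    exact theta_inv V W T ε hε hTV hTW φ ψ hφnat hψnat hψφ g hg1 hg2 hg3 s x
  · intro s
    ext x
    simp only [LinearMap.comp_apply, LinearMap.id_apply]
    exact theta_inv W V T ε hε hTW hTV ψ φ hψnat hφnat hφψ g hg1 hg2 hg3 s x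
end

section
/- Matching characterization of the bottleneck distance: for finite barcodes B1, B2 and ε ≥ 0, one has d_bot(B1, B2) ≤ ε if and only if for every δ > ε there exist representative families (I_j)_{j ∈ A1} of B1 and (I'_k)_{k ∈ A2} of B2 (which are allowed to contain trivial intervals) and a bijection σ : A1 → A2 such that d(I_j, I'_{σ(j)}) ≤ δ for every j ∈ A1. -/
open scoped ENNReal Classical

/-- A bar `(a, b]` with `-∞ ≤ a ≤ b ≤ +∞`, encoded by its pair of endpoints in `EReal`. -/
abbrev Bar : Type := EReal × EReal

/-- The distance `|x - y|` between two extended-real endpoints, with the conventions that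
equal endpoints (possibly infinite) are at distance `0` and distinct endpoints one of which
is infinite are at distance `∞`. -/
noncomputable def erealDist (x y : EReal) : ℝ≥0∞ :=
  if x = y then 0
  else if x = ⊤ ∨ x = ⊥ ∨ y = ⊤ ∨ y = ⊥ then ⊤
  else ENNReal.ofReal |x.toReal - y.toReal|

/-- `d((a,b], (c,d]) = max (|c - a|) (|d - b|)`. -/
noncomputable def barDist (I J : Bar) : ℝ≥0∞ :=
  max (erealDist I.1 J.1) (erealDist I.2 J.2)

/-- The length of the bar `(a, b]`. -/
noncomputable def barLength (I : Bar) : ℝ≥0∞ := erealDist I.1 I.2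

/-- A (finite) barcode: an equivalence class of finite families of intervals, described by
its canonical representative, the finite multiset of its nontrivial intervals. -/
structure Barcode where
  bars : Multiset Bar
  nontrivial : ∀ I ∈ bars, I.1 < I.2

/-- The multiset of nontrivial intervals of a family of intervals. -/
noncomputable def reduceBars (s : Multiset Bar) : Multiset Bar :=
  s.filter fun I => I.1 < I.2

/-- A finite family of intervals (possibly containing trivial intervals) represents the
barcode `B` if its nontrivial intervals are exactly those of `B`. -/
def Represents (s : Multiset Bar) (B : Barcode) : Prop :=
  (∀ I ∈ s, I.1 ≤ I.2) ∧ reduceBars s = B.bars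

/-- A partial matching between two families of intervals, realizing the bound `ε`:
a bijection between sub-families moving intervals at most `ε`, all remaining intervals
having length at most `2ε`. -/
def IsPartialMatching (s t : Multiset Bar) (ε : ℝ≥0∞) : Prop :=
  ∃ P : Multiset (Bar × Bar),
    P.map Prod.fst ≤ s ∧ P.map Prod.snd ≤ t ∧
    (∀ p ∈ P, barDist p.1 p.2 ≤ ε) ∧
    (∀ I ∈ s - P.map Prod.fst, barLength I ≤ 2 * ε) ∧
    (∀ I ∈ t - P.map Prod.snd, barLength I ≤ 2 * ε)

/-- The bottleneck distance between two barcodes. -/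
noncomputable def dBot (B1 B2 : Barcode) : ℝ≥0∞ :=
  sInf {ε : ℝ≥0∞ | ∃ s t : Multiset Bar,
    Represents s B1 ∧ Represents t B2 ∧ IsPartialMatching s t ε}

noncomputable def midBar (I : Bar) : Bar :=
  if I.1 = I.2 then I
  else (((I.1.toReal + I.2.toReal) / 2 : ℝ), ((I.1.toReal + I.2.toReal) / 2 : ℝ))

lemma midBar_eq (I : Bar) : (midBar I).1 = (midBar I).2 := by
  unfold midBar; split
  · assumption
  · rfl

lemma erealDist_comm (x y : EReal) : erealDist x y = erealDist y x := by
  unfold erealDist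
  split_ifs <;> first | rfl | (exfalso; tauto) | rw [abs_sub_comm]

lemma barDist_comm (I J : Bar) : barDist I J = barDist J I := by
  rw [barDist, barDist, erealDist_comm I.1, erealDist_comm I.2]

lemma barDist_midBar {I : Bar} (hle : I.1 ≤ I.2) {ε : ℝ≥0∞} (h : barLength I ≤ 2 * ε) :
    barDist I (midBar I) ≤ ε := by
  rcases eq_or_ne ε ⊤ with rfl | hε
  · exact le_top
  rcases eq_or_ne I.1 I.2 with he | hne
  · simp [midBar, he, barDist, erealDist]
  have hlen : erealDist I.1 I.2 ≠ ⊤ := by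
    intro htop
    rw [barLength, htop, top_le_iff] at h
    exact hε (by simpa [ENNReal.mul_eq_top] using h)
  have hfin : ¬(I.1 = ⊤ ∨ I.1 = ⊥ ∨ I.2 = ⊤ ∨ I.2 = ⊥) := by
    intro hc
    exact hlen (by rw [erealDist, if_neg hne, if_pos hc])
  push_neg at hfin
  obtain ⟨h1t, h1b, h2t, h2b⟩ := hfin
  set a := I.1.toReal with ha
  set b := I.2.toReal with hb
  have hI1 : I.1 = (a : EReal) := (EReal.coe_toReal h1t h1b).symm
  have hI2 : I.2 = (b : EReal) := (EReal.coe_toReal h2t h2b).symm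
  have hab : a < b := by
    have := hle.lt_of_ne hne
    rw [hI1, hI2, EReal.coe_lt_coe_iff] at this
    exact this
  set m : ℝ := (a + b) / 2 with hm
  have ham : a < m := by rw [hm]; linarith
  have hmb : m < b := by rw [hm]; linarith
  have hmid : midBar I = ((m : EReal), (m : EReal)) := by
    rw [midBar, if_neg hne]
  have key : ∀ x : ℝ, x ≠ m → erealDist (x : EReal) (m : EReal) = ENNReal.ofReal |x - m| := by
    intro x hx
    rw [erealDist, if_neg (by exact_mod_cast hx), if_neg (by simp)]
    simp
  have hd1 : erealDist I.1 (m : EReal) = ENNReal.ofReal ((b - a) / 2) := by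
    rw [hI1, key a ham.ne]
    congr 1
    rw [abs_of_nonpos (by linarith), hm]; ring
  have hd2 : erealDist I.2 (m : EReal) = ENNReal.ofReal ((b - a) / 2) := by
    rw [hI2, key b hmb.ne']
    congr 1
    rw [abs_of_nonneg (by linarith), hm]; ring
  have hbd : barDist I (midBar I) = ENNReal.ofReal ((b - a) / 2) := by
    rw [barDist, hmid]; simp [hd1, hd2]
  have hbl : barLength I = ENNReal.ofReal (b - a) := by
    rw [barLength, erealDist, if_neg hne, if_neg (by push_neg; exact ⟨h1t, h1b, h2t, h2b⟩)]
    rw [← ha, ← hb, abs_of_nonpos (by linarith)]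
    congr 1; ring
  rw [hbd]
  rw [hbl] at h
  have h2 : ENNReal.ofReal (b - a) = 2 * ENNReal.ofReal ((b - a) / 2) := by
    rw [← ENNReal.ofReal_ofNat, ← ENNReal.ofReal_mul (by norm_num)]
    congr 1; ring
  rw [h2] at h
  exact (ENNReal.mul_le_mul_iff_right (by norm_num) (by norm_num)).1 h

lemma midBar_not_lt (I : Bar) : ¬ (midBar I).1 < (midBar I).2 := by
  rw [midBar_eq]; exact lt_irrefl _

lemma represents_add_mids {s : Multiset Bar} {B : Barcode} (hs : Represents s B)
    (w : Multiset Bar) : Represents (s + w.map midBar) B := by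
  constructor
  · intro I hI
    rw [Multiset.mem_add] at hI
    rcases hI with h | h
    · exact hs.1 I h
    · rcases Multiset.mem_map.1 h with ⟨J, _, rfl⟩
      exact le_of_eq (midBar_eq J)
  · rw [reduceBars, Multiset.filter_add]
    have hz : (w.map midBar).filter (fun I => I.1 < I.2) = 0 :=
      Multiset.filter_eq_nil.2 (by
        intro I hI
        rcases Multiset.mem_map.1 hI with ⟨J, _, rfl⟩
        exact midBar_not_lt J)
    rw [hz, add_zero]
    exact hs.2

/-- Matching characterization of the bottleneck distance: `d_bot(B1, B2) ≤ ε` if and only if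
for every `δ > ε` there are representative families of `B1` and `B2` (allowed to contain
trivial intervals) and a bijection between them moving every interval at most `δ`. -/
theorem stmt3 (B1 B2 : Barcode) (ε : ℝ≥0∞) :
    dBot B1 B2 ≤ ε ↔
      ∀ δ : ℝ≥0∞, ε < δ →
        ∃ s t : Multiset Bar, Represents s B1 ∧ Represents t B2 ∧
          ∃ P : Multiset (Bar × Bar),
            P.map Prod.fst = s ∧ P.map Prod.snd = t ∧
            ∀ p ∈ P, barDist p.1 p.2 ≤ δ := by
  constructor
  · intro h δ hδ
    have hlt : dBot B1 B2 < δ := lt_of_le_of_lt h hδ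
    rw [dBot, sInf_lt_iff] at hlt
    obtain ⟨ε', ⟨s, t, hs, ht, P, hP1, hP2, hPd, hPu, hPv⟩, hε'lt⟩ := hlt
    refine ⟨s + (t - P.map Prod.snd).map midBar, t + (s - P.map Prod.fst).map midBar,
      represents_add_mids hs _, represents_add_mids ht _,
      P + (s - P.map Prod.fst).map (fun I => (I, midBar I))
        + (t - P.map Prod.snd).map (fun I => (midBar I, I)), ?_, ?_, ?_⟩
    · simp only [Multiset.map_add, Multiset.map_map, Function.comp_def]
      rw [Multiset.map_id', add_tsub_cancel_of_le hP1]
    · simp only [Multiset.map_add, Multiset.map_map, Function.comp_def]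
      rw [Multiset.map_id', add_right_comm, add_tsub_cancel_of_le hP2]
    · intro p hp
      simp only [Multiset.mem_add] at hp
      rcases hp with (hp | hp) | hp
      · exact (hPd p hp).trans hε'lt.le
      · obtain ⟨I, hI, rfl⟩ := Multiset.mem_map.1 hp
        exact (barDist_midBar (hs.1 I (Multiset.mem_of_le tsub_le_self hI)) (hPu I hI)).trans
          hε'lt.le
      · obtain ⟨I, hI, rfl⟩ := Multiset.mem_map.1 hp
        rw [barDist_comm]
        exact (barDist_midBar (ht.1 I (Multiset.mem_of_le tsub_le_self hI)) (hPv I hI)).trans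
          hε'lt.le
  · intro h
    apply le_of_forall_gt_imp_ge_of_dense
    intro δ hδ
    obtain ⟨s, t, hs, ht, P, h1, h2, h3⟩ := h δ hδ
    apply sInf_le
    refine ⟨s, t, hs, ht, P, le_of_eq h1, le_of_eq h2, h3, ?_, ?_⟩
    · intro I hI
      rw [h1, tsub_self] at hI
      exact absurd hI (Multiset.notMem_zero I)
    · intro I hI
      rw [h2, tsub_self] at hI
      exact absurd hI (Multiset.notMem_zero I)
end

section
/- Counting bars with one endpoint in a window: let B be a finite barcode and let a < b be real numbers that are not endpoints of any interval of B. Then the homology of the quotient complex C(B)^b / C(B)^a (with the differential induced by ∂) is a vector space of dimension equal to the number of intervals of B (counted with multiplicity) having exactly one endpoint in the open interval (a, b), where the endpoints of an interval (α, β] are α and, when β < +∞, also β. -/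
open scoped Classical

/-- The index type of the generators of the chain complex `C(B)` associated to the family
of intervals `I`: each interval `(a_j, b_j]` contributes a generator `x_{a_j}`
(`Bool` value `false`), and also a generator `x_{b_j}` (`Bool` value `true`) when
`b_j < +∞`. -/
def GenIdx {ι : Type} (I : ι → Bar) : Type :=
  {p : ι × Bool // p.2 = true → (I p.1).2 ≠ ⊤}

/-- The filtration value of a generator: `b_j` for the generator `x_{b_j}` and `a_j` for
the generator `x_{a_j}`. -/
def genVal {ι : Type} (I : ι → Bar) (g : GenIdx I) : EReal :=
  if g.val.2 = true then (I g.val.1).2 else (I g.val.1).1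

/-- The differential of the chain complex `C(B)`: `∂ x_{b_j} = x_{a_j}`, `∂ x_{a_j} = 0`. -/
noncomputable def bnd (F : Type) [Field F] {ι : Type} (I : ι → Bar) :
    (GenIdx I → F) →ₗ[F] (GenIdx I → F) where
  toFun f g :=
    if h : g.val.2 = false ∧ (I g.val.1).2 ≠ ⊤ then f ⟨(g.val.1, true), fun _ => h.2⟩ else 0
  map_add' f₁ f₂ := by
    funext g
    by_cases h : g.val.2 = false ∧ (I g.val.1).2 ≠ ⊤
    · simp [h]; rfl
    · simp [h]
  map_smul' c f := by
    funext g
    by_cases h : g.val.2 = false ∧ (I g.val.1).2 ≠ ⊤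
    · simp [h]; rfl
    · simp [h]

/-- The filtration level `t` part `C(B)^t` of the chain complex: the span of the
generators `x_c` with `c < t`. -/
def filtC (F : Type) [Field F] {ι : Type} (I : ι → Bar) (t : ℝ) :
    Submodule F (GenIdx I → F) where
  carrier := {f | ∀ g : GenIdx I, ¬ genVal I g < (t : EReal) → f g = 0}
  add_mem' := by
    intro a b ha hb g hg
    simp [ha g hg, hb g hg]
  zero_mem' := by intro g _; rfl
  smul_mem' := by
    intro c f hf g hg
    simp [hf g hg]


/-- The differential preserves the filtration: `∂(C(B)^u) ⊆ C(B)^u`. -/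
theorem bnd_mem_filt (F : Type) [Field F] {ι : Type} (I : ι → Bar)
    (hI : ∀ j, (I j).1 < (I j).2) (u : ℝ) :
    ∀ x ∈ filtC F I u, bnd F I x ∈ filtC F I u := by
  intro x hx
  show ∀ g : GenIdx I, ¬ genVal I g < (u : EReal) → bnd F I x g = 0
  intro g hg
  show (if h : g.val.2 = false ∧ (I g.val.1).2 ≠ ⊤ then
      x ⟨(g.val.1, true), fun _ => h.2⟩ else 0) = 0
  split_ifs with h
  · apply hx
    intro hlt
    apply hg
    have h2 : genVal I ⟨(g.val.1, true), fun _ => h.2⟩ = (I g.val.1).2 := by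
      simp [genVal]
    have h1 : genVal I g = (I g.val.1).1 := by
      simp [genVal, h.1]
    rw [h2] at hlt
    rw [h1]
    exact lt_trans (hI g.val.1) hlt
  · rfl

/-- The differential of `C(B)` restricted to the subcomplex `C(B)^v`. -/
noncomputable def bndRes (F : Type) [Field F] {ι : Type} (I : ι → Bar)
    (hI : ∀ j, (I j).1 < (I j).2) (v : ℝ) :
    ↥(filtC F I v) →ₗ[F] ↥(filtC F I v) :=
  (bnd F I).restrict (p := filtC F I v) (q := filtC F I v) (bnd_mem_filt F I hI v)

/-- The quotient complex `C(B)^v / C(B)^u`. -/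
abbrev relCx (F : Type) [Field F] {ι : Type} (I : ι → Bar) (u v : ℝ) : Type :=
  ↥(filtC F I v) ⧸ (filtC F I u).comap (filtC F I v).subtype

/-- The differential induced by `∂` on the quotient complex `C(B)^v / C(B)^u`. -/
noncomputable def relBnd (F : Type) [Field F] {ι : Type} (I : ι → Bar)
    (hI : ∀ j, (I j).1 < (I j).2) (u v : ℝ) :
    relCx F I u v →ₗ[F] relCx F I u v :=
  Submodule.mapQ ((filtC F I u).comap (filtC F I v).subtype)
    ((filtC F I u).comap (filtC F I v).subtype)
    (bndRes F I hI v)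
    (by
      intro x hx
      have hx' : (x : GenIdx I → F) ∈ filtC F I u := hx
      have : bnd F I (x : GenIdx I → F) ∈ filtC F I u := bnd_mem_filt F I hI u _ hx'
      exact this)

/-- The homology `ker ∂̄ / im ∂̄` of the quotient complex `C(B)^v / C(B)^u`. -/
noncomputable abbrev relHomology (F : Type) [Field F] {ι : Type} (I : ι → Bar)
    (hI : ∀ j, (I j).1 < (I j).2) (u v : ℝ) : Type :=
  ↥(LinearMap.ker (relBnd F I hI u v)) ⧸
    (LinearMap.range (relBnd F I hI u v)).comap (LinearMap.ker (relBnd F I hI u v)).subtype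

/-!
Identify `C(B)^v / C(B)^u` with the functions on the generators `x_c` with `u ≤ c < v`. In these
coordinates the induced differential reads off, at `x_{a_j}`, the value at `x_{b_j}` for the bars
with both endpoints in `[u, v)` and vanishes elsewhere: it is a coordinate projection followed by an
injective extension by zero, so its rank is the number `r` of such bars. As `∂̄² = 0`, the homology
has dimension `#{a_j ∈ [u, v)} + #{b_j ∈ [u, v)} - 2 r`, which counts the bars with exactly one
endpoint in `[u, v)`; since `u` is not an endpoint, `[u, v)` may be replaced by `(u, v)`.
-/

open LinearMap Module Finset

section LinearAlgebra

variable {K V : Type*} [DivisionRing K] [AddCommGroup V] [Module K V] [FiniteDimensional K V]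

theorem finrank_homology_add_two_mul_finrank_range (D : V →ₗ[K] V) (hD : D ∘ₗ D = 0) :
    finrank K (ker D ⧸ (range D).comap (ker D).subtype) + 2 * finrank K (range D) =
      finrank K V := by
  have hle : range D ≤ ker D := by
    rintro _ ⟨y, rfl⟩
    exact LinearMap.congr_fun hD y
  have hquot := Submodule.finrank_quotient_add_finrank ((range D).comap (ker D).subtype)
  rw [(Submodule.comapSubtypeEquivOfLe hle).finrank_eq] at hquot
  have hrank := finrank_range_add_finrank_ker D
  omega

end LinearAlgebra

theorem Finset.card_filter_xor_add_two_mul_card_filter_and {α : Type*} (s : Finset α)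
    (p q : α → Prop) [DecidablePred p] [DecidablePred q] :
    #{a ∈ s | Xor (p a) (q a)} + 2 * #{a ∈ s | p a ∧ q a} = #{a ∈ s | p a} + #{a ∈ s | q a} := by
  simp only [card_filter, mul_sum, ← sum_add_distrib]
  refine sum_congr rfl fun a _ => ?_
  by_cases p a <;> by_cases q a <;> simp [*]

section BarcodeComplex

variable {F : Type} [Field F] {ι : Type} {I : ι → Bar}

noncomputable instance [Fintype ι] : Fintype (GenIdx I) :=
  inferInstanceAs (Fintype {p : ι × Bool // p.2 = true → (I p.1).2 ≠ ⊤})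

variable (I) in
def GenIdx.birth (j : ι) : GenIdx I := ⟨(j, false), by simp⟩

def GenIdx.death {j : ι} (hj : (I j).2 ≠ ⊤) : GenIdx I := ⟨(j, true), fun _ => hj⟩

@[elab_as_elim]
theorem GenIdx.ind {motive : GenIdx I → Prop} (birth : ∀ j, motive (.birth I j))
    (death : ∀ {j} (hj : (I j).2 ≠ ⊤), motive (.death hj)) (g : GenIdx I) : motive g := by
  obtain ⟨⟨j, _ | _⟩, hj⟩ := g
  exacts [birth j, death (hj rfl)]

@[simp]
theorem genVal_birth (j : ι) : genVal I (GenIdx.birth I j) = (I j).1 := by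
  simp [genVal, GenIdx.birth]

@[simp]
theorem genVal_death {j : ι} (hj : (I j).2 ≠ ⊤) : genVal I (GenIdx.death hj) = (I j).2 := by
  simp [genVal, GenIdx.death]

theorem bnd_apply_birth (x : GenIdx I → F) (j : ι) :
    bnd F I x (GenIdx.birth I j) = if hj : (I j).2 ≠ ⊤ then x (GenIdx.death hj) else 0 := by
  simp [bnd, GenIdx.birth, GenIdx.death]

theorem bnd_apply_death (x : GenIdx I → F) {j : ι} (hj : (I j).2 ≠ ⊤) :
    bnd F I x (GenIdx.death hj) = 0 := by
  simp [bnd, GenIdx.death]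

theorem bnd_comp_bnd : bnd F I ∘ₗ bnd F I = 0 := by
  refine LinearMap.ext fun x => funext fun g => ?_
  induction g using GenIdx.ind with
  | birth j =>
    rw [LinearMap.comp_apply, bnd_apply_birth]
    split_ifs with hj
    exacts [bnd_apply_death _ hj, rfl]
  | death hj => exact bnd_apply_death (bnd F I x) hj

end BarcodeComplex

section Window

variable {F : Type} [Field F] {ι : Type} {I : ι → Bar}

theorem relBnd_mk (hI : ∀ j, (I j).1 < (I j).2) (u v : ℝ) (x : filtC F I v) :
    relBnd F I hI u v (Submodule.Quotient.mk x) = Submodule.Quotient.mk (bndRes F I hI v x) :=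
  rfl

theorem relBnd_comp_relBnd (hI : ∀ j, (I j).1 < (I j).2) (u v : ℝ) :
    relBnd F I hI u v ∘ₗ relBnd F I hI u v = 0 := by
  refine Submodule.linearMap_qext _ (LinearMap.ext fun x => ?_)
  have hx : bndRes F I hI v (bndRes F I hI v x) = 0 :=
    Subtype.ext (LinearMap.congr_fun bnd_comp_bnd x.val)
  simp only [LinearMap.comp_apply, Submodule.mkQ_apply, relBnd_mk, hx, Submodule.Quotient.mk_zero,
    LinearMap.zero_apply]

variable (I) (u v : ℝ)

abbrev Window : Type := {g : GenIdx I // genVal I g ∈ Set.Ico (u : EReal) v}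

variable (F) in
noncomputable def restrictWindow : filtC F I v →ₗ[F] (Window I u v → F) :=
  funLeft F F Subtype.val ∘ₗ (filtC F I v).subtype

theorem ker_restrictWindow :
    ker (restrictWindow F I u v) = (filtC F I u).comap (filtC F I v).subtype := by
  ext x
  simp only [mem_ker, Submodule.mem_comap, Submodule.coe_subtype]
  constructor
  · intro hx g hgu
    by_cases hgv : genVal I g < v
    · exact congr_fun hx ⟨g, not_lt.1 hgu, hgv⟩
    · exact x.2 g hgv
  · intro hx
    funext s
    exact hx s.val (not_lt.2 s.2.1)

theorem extend_mem_filtC (f : Window I u v → F) :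
    Function.extend Subtype.val f 0 ∈ filtC F I v := by
  intro g hg
  refine Function.extend_apply' _ _ _ ?_
  rintro ⟨s, rfl⟩
  exact hg s.2.2

theorem restrictWindow_extend (f : Window I u v → F) :
    restrictWindow F I u v ⟨_, extend_mem_filtC I u v f⟩ = f :=
  funext fun s => Subtype.val_injective.extend_apply f 0 s

variable (F) in
noncomputable def windowEquiv : relCx F I u v ≃ₗ[F] (Window I u v → F) :=
  Submodule.quotEquivOfEq _ _ (ker_restrictWindow I u v).symm ≪≫ₗ
    (restrictWindow F I u v).quotKerEquivOfSurjective
      fun f => ⟨_, restrictWindow_extend I u v f⟩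

theorem windowEquiv_mk (x : filtC F I v) :
    windowEquiv F I u v (Submodule.Quotient.mk x) = restrictWindow F I u v x := rfl

abbrev BarInWindow : Type :=
  {j : ι // (I j).1 ∈ Set.Ico (u : EReal) v ∧ (I j).2 ∈ Set.Ico (u : EReal) v}

def birthInWindow (j : BarInWindow I u v) : Window I u v :=
  ⟨GenIdx.birth I j.1, by simpa using j.2.1⟩

def deathInWindow (j : BarInWindow I u v) : Window I u v :=
  ⟨GenIdx.death j.2.2.2.ne_top, by simpa using j.2.2⟩

theorem birthInWindow_injective : Function.Injective (birthInWindow I u v) :=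
  fun _ _ h => Subtype.ext (congrArg (fun s => s.val.val.1) h)

theorem deathInWindow_injective : Function.Injective (deathInWindow I u v) :=
  fun _ _ h => Subtype.ext (congrArg (fun s => s.val.val.1) h)

theorem bnd_extend_apply (f : Window I u v → F) (s : Window I u v) :
    bnd F I (Function.extend Subtype.val f 0) s.val =
      Function.extend (birthInWindow I u v) (f ∘ deathInWindow I u v) 0 s := by
  obtain ⟨g, hg⟩ := s
  induction g using GenIdx.ind with
  | death hj =>
    rw [bnd_apply_death, Function.extend_apply', Pi.zero_apply]
    rintro ⟨t, ht⟩
    simpa [birthInWindow, GenIdx.birth, GenIdx.death] using congrArg (fun s => s.val.val.2) ht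
  | birth j =>
    rw [bnd_apply_birth]
    by_cases hd : (I j).2 ∈ Set.Ico (u : EReal) v
    · let t : BarInWindow I u v := ⟨j, by simpa using hg, hd⟩
      rw [dif_pos hd.2.ne_top]
      exact (Subtype.val_injective.extend_apply f 0 (deathInWindow I u v t)).trans
        ((birthInWindow_injective I u v).extend_apply (f ∘ deathInWindow I u v) 0 t).symm
    · rw [Function.extend_apply']
      · split_ifs with hj
        · refine Function.extend_apply' _ _ _ ?_
          rintro ⟨s, hs⟩
          exact hd (by simpa [hs] using s.2)
        · rfl
      · rintro ⟨t, ht⟩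
        have htj : t.1 = j := congrArg (fun s => s.val.val.1) ht
        exact hd (htj ▸ t.2.2)

theorem windowEquiv_conj_relBnd (hI : ∀ j, (I j).1 < (I j).2) :
    (windowEquiv F I u v).conj (relBnd F I hI u v) =
      Function.ExtendByZero.linearMap F (birthInWindow I u v) ∘ₗ
        funLeft F F (deathInWindow I u v) := by
  refine LinearMap.ext fun f => funext fun s => ?_
  have hsymm : (windowEquiv F I u v).symm f =
      Submodule.Quotient.mk ⟨_, extend_mem_filtC I u v f⟩ := by
    rw [LinearEquiv.symm_apply_eq, windowEquiv_mk, restrictWindow_extend]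
  rw [LinearEquiv.conj_apply_apply, hsymm, relBnd_mk, windowEquiv_mk]
  exact bnd_extend_apply I u v f s

variable [Fintype ι]

theorem finrank_relCx : finrank F (relCx F I u v) = Fintype.card (Window I u v) :=
  (windowEquiv F I u v).finrank_eq.trans (finrank_fintype_fun_eq_card F)

theorem finrank_range_relBnd (hI : ∀ j, (I j).1 < (I j).2) :
    finrank F (range (relBnd F I hI u v)) = Fintype.card (BarInWindow I u v) := by
  set e := windowEquiv F I u v
  have hrange : range (e.conj (relBnd F I hI u v)) =
      (range (relBnd F I hI u v)).map (e : relCx F I u v →ₗ[F] _) := by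
    rw [LinearEquiv.conj_apply, range_comp_of_range_eq_top _ e.symm.range, range_comp]
  have hdeath : range (funLeft F F (deathInWindow I u v)) = ⊤ :=
    range_eq_top.2 (funLeft_surjective_of_injective F F _ (deathInWindow_injective I u v))
  rw [← e.finrank_map_eq, ← hrange, windowEquiv_conj_relBnd, range_comp_of_range_eq_top _ hdeath,
    finrank_range_of_inj (Function.extend_injective (birthInWindow_injective I u v) 0),
    finrank_fintype_fun_eq_card]

theorem card_window :
    Fintype.card (Window I u v) =
      #{j | (I j).1 ∈ Set.Ico (u : EReal) v} + #{j | (I j).2 ∈ Set.Ico (u : EReal) v} := by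
  rw [Fintype.card_congr (α := Window I u v) (Equiv.subtypeSubtypeEquivSubtypeExists _ _),
    Fintype.card_subtype, card_filter, Fintype.sum_prod_type, card_filter, card_filter,
    ← sum_add_distrib]
  refine sum_congr rfl fun j _ => ?_
  rw [Fintype.sum_bool, add_comm]
  congr 1 <;> refine if_congr ?_ rfl rfl
  · simp [genVal]
  · simpa [genVal] using fun _ h => h.ne_top

theorem finrank_relHomology (hI : ∀ j, (I j).1 < (I j).2) :
    finrank F (relHomology F I hI u v) =
      #{j | Xor ((I j).1 ∈ Set.Ico (u : EReal) v) ((I j).2 ∈ Set.Ico (u : EReal) v)} := by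
  have hdim : finrank F (relHomology F I hI u v) + 2 * finrank F (range (relBnd F I hI u v)) =
      finrank F (relCx F I u v) :=
    finrank_homology_add_two_mul_finrank_range _ (relBnd_comp_relBnd hI u v)
  rw [finrank_range_relBnd, finrank_relCx, card_window, Fintype.card_subtype] at hdim
  have hcount := card_filter_xor_add_two_mul_card_filter_and univ
    (fun j => (I j).1 ∈ Set.Ico (u : EReal) v) (fun j => (I j).2 ∈ Set.Ico (u : EReal) v)
  omega

end Window

theorem stmt11_general (F : Type) [Field F] (ι : Type) [Fintype ι] (I : ι → Bar)
    (hI : ∀ j, (I j).1 < (I j).2) (u v : ℝ)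
    (hend : ∀ j, (I j).1 ≠ (u : EReal) ∧ (I j).1 ≠ (v : EReal) ∧
      ((I j).2 ≠ ⊤ → ((I j).2 ≠ (u : EReal) ∧ (I j).2 ≠ (v : EReal)))) :
    Module.finrank F (relHomology F I hI u v) =
      (Finset.univ.filter fun j : ι =>
        Xor' ((u : EReal) < (I j).1 ∧ (I j).1 < (v : EReal))
          ((I j).2 ≠ ⊤ ∧ (u : EReal) < (I j).2 ∧ (I j).2 < (v : EReal))).card := by
  rw [finrank_relHomology]
  refine congrArg card (filter_congr fun j _ => ?_)
  obtain ⟨hau, -, hbu⟩ := hend j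
  have hbirth : (I j).1 ∈ Set.Ico (u : EReal) v ↔ (u : EReal) < (I j).1 ∧ (I j).1 < v :=
    ⟨fun h => ⟨h.1.lt_of_ne' hau, h.2⟩, fun h => ⟨h.1.le, h.2⟩⟩
  have hdeath : (I j).2 ∈ Set.Ico (u : EReal) v ↔
      (I j).2 ≠ ⊤ ∧ (u : EReal) < (I j).2 ∧ (I j).2 < v :=
    ⟨fun h => ⟨h.2.ne_top, h.1.lt_of_ne' (hbu h.2.ne_top).1, h.2⟩, fun h => ⟨h.2.1.le, h.2.2⟩⟩
  rw [hbirth, hdeath]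
  rfl

/-- Counting bars with exactly one endpoint in a window: if `u < v` are not endpoints of any
interval of the barcode, the dimension of the homology of `C(B)^v / C(B)^u` equals the
number of intervals with exactly one endpoint in `(u, v)`. -/
theorem stmt11 (F : Type) [Field F] (ι : Type) [Fintype ι] (I : ι → Bar)
    (hI : ∀ j, (I j).1 < (I j).2) (u v : ℝ) (huv : u < v)
    (hend : ∀ j, (I j).1 ≠ (u : EReal) ∧ (I j).1 ≠ (v : EReal) ∧
      ((I j).2 ≠ ⊤ → ((I j).2 ≠ (u : EReal) ∧ (I j).2 ≠ (v : EReal)))) :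
    Module.finrank F (relHomology F I hI u v) =
      (Finset.univ.filter fun j : ι =>
        Xor' ((u : EReal) < (I j).1 ∧ (I j).1 < (v : EReal))
          ((I j).2 ≠ ⊤ ∧ (u : EReal) < (I j).2 ∧ (I j).2 < (v : EReal))).card :=
  stmt11_general F ι I hI u v hend
end

section
/- Universal property of the weak conjugacy relation: let G be a topological group and let R ⊆ G × G be the intersection of the graphs of all equivalence relations ∼ on G that contain the conjugacy relation (x ∼ h x h⁻¹ for all x, h ∈ G) and whose quotient space G/∼ is Hausdorff. Then: (i) R is itself the graph of an equivalence relation on G that contains the conjugacy relation and whose quotient is Hausdorff; and (ii) for all f, g ∈ G, (f, g) ∈ R if and only if θ(f) = θ(g) for every Hausdorff topological space Y and every continuous map θ : G → Y satisfying θ(h x h⁻¹) = θ(x) for all x, h ∈ G. -/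
/-- An equivalence relation (setoid) on a topological group which contains the conjugacy
relation and whose quotient space is Hausdorff. -/
def ConjClosedHausdorff (G : Type) [Group G] [TopologicalSpace G] (s : Setoid G) : Prop :=
  (∀ x h : G, s.r x (h * x * h⁻¹)) ∧ T2Space (Quotient s)

/-- The graph of the weak conjugacy relation: the intersection of the graphs of all
Hausdorff equivalence relations containing the conjugacy relation. -/
def weakConjGraph (G : Type) [Group G] [TopologicalSpace G] : Set (G × G) :=
  {p : G × G | ∀ s : Setoid G, ConjClosedHausdorff G s → s.r p.1 p.2}

/-! Hausdorff equivalence relations on a space are closed under arbitrary intersections: two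
points distinct in the quotient by the intersection are already distinct in one Hausdorff
quotient, which receives a continuous map from the finer quotient. Moreover such relations are
exactly the kernels of continuous maps to Hausdorff spaces (a relation being the kernel of its
own quotient map), and conjugation-closed ones correspond to conjugation-invariant maps. -/

namespace Setoid

variable {X : Type*} [TopologicalSpace X]

theorem t2Space_quotient_ker {Y : Type*} [TopologicalSpace Y] [T2Space Y] {f : X → Y}
    (hf : Continuous f) : T2Space (Quotient (ker f)) :=
  .of_injective_continuous (kerLift_injective f) (hf.quotient_lift _)

theorem t2Space_quotient_sInf {S : Set (Setoid X)} (hS : ∀ s ∈ S, T2Space (Quotient s)) :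
    T2Space (Quotient (sInf S)) := by
  refine ⟨Quotient.ind₂ fun x y hxy => ?_⟩
  obtain ⟨s, hs, hsxy⟩ : ∃ s ∈ S, ¬ s x y := by
    simpa [quotient_mk_sInf_eq] using hxy
  have := hS s hs
  exact separated_by_continuous (f := map_of_le (sInf_le hs))
    (continuous_quotient_mk'.quotient_lift _) fun h => hsxy (Quotient.exact h)

end Setoid

section WeakConjugacy

variable (G : Type) [Group G] [TopologicalSpace G]

def weakConjSetoid : Setoid G :=
  sInf {s | ConjClosedHausdorff G s}

theorem weakConjSetoid_iff {a b : G} : weakConjSetoid G a b ↔ (a, b) ∈ weakConjGraph G :=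
  Iff.rfl

theorem conjClosedHausdorff_weakConjSetoid : ConjClosedHausdorff G (weakConjSetoid G) :=
  ⟨fun x h _ hs => hs.1 x h, Setoid.t2Space_quotient_sInf fun _ hs => hs.2⟩

variable {G}

theorem conjClosedHausdorff_ker {Y : Type*} [TopologicalSpace Y] [T2Space Y] {θ : G → Y}
    (hθ : Continuous θ) (hconj : ∀ x h : G, θ (h * x * h⁻¹) = θ x) :
    ConjClosedHausdorff G (Setoid.ker θ) :=
  ⟨fun x h => (hconj x h).symm, Setoid.t2Space_quotient_ker hθ⟩

theorem quotient_mk_conj {s : Setoid G} (hs : ConjClosedHausdorff G s) (x h : G) :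
    Quotient.mk s (h * x * h⁻¹) = Quotient.mk s x :=
  (Quotient.sound (hs.1 x h)).symm

end WeakConjugacy

theorem stmt12_general (G : Type) [Group G] [TopologicalSpace G] :
    (∃ s₀ : Setoid G, (∀ a b : G, s₀.r a b ↔ (a, b) ∈ weakConjGraph G) ∧
      ConjClosedHausdorff G s₀) ∧
    (∀ f g : G, (f, g) ∈ weakConjGraph G ↔
      ∀ (Y : Type) [TopologicalSpace Y] [T2Space Y] (θ : G → Y),
        Continuous θ → (∀ x h : G, θ (h * x * h⁻¹) = θ x) → θ f = θ g) := by
  refine ⟨⟨weakConjSetoid G, fun _ _ => weakConjSetoid_iff G,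
    conjClosedHausdorff_weakConjSetoid G⟩, fun f g => ⟨?_, ?_⟩⟩
  · intro hfg Y _ _ θ hθ hconj
    exact hfg _ (conjClosedHausdorff_ker hθ hconj)
  · intro hθ s hs
    have := hs.2
    exact Quotient.exact (hθ _ _ continuous_quotient_mk' (quotient_mk_conj hs))

/-- Universal property of the weak conjugacy relation. -/
theorem stmt12 (G : Type) [Group G] [TopologicalSpace G] [IsTopologicalGroup G] :
    (∃ s₀ : Setoid G, (∀ a b : G, s₀.r a b ↔ (a, b) ∈ weakConjGraph G) ∧
      ConjClosedHausdorff G s₀) ∧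
    (∀ f g : G, (f, g) ∈ weakConjGraph G ↔
      ∀ (Y : Type) [TopologicalSpace Y] [T2Space Y] (θ : G → Y),
        Continuous θ → (∀ x h : G, θ (h * x * h⁻¹) = θ x) → θ f = θ g) :=
  stmt12_general G
end

section
/- Chain criterion for weak conjugacy: let G be a topological group and f, g ∈ G. If there exist h_1, …, h_N ∈ G with h_1 = f and h_N = g such that the closures of the conjugacy classes of h_i and h_{i+1} intersect for each 1 ≤ i ≤ N−1 (i.e. closure(Conj(h_i)) ∩ closure(Conj(h_{i+1})) ≠ ∅, where Conj(h) = { k h k⁻¹ : k ∈ G }), then f and g are weakly conjugate. -/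
/-- Two elements of a topological group are weakly conjugate if they cannot be separated
by any continuous conjugation-invariant map into a Hausdorff topological space. -/
def WeaklyConjugate (G : Type) [Group G] [TopologicalSpace G] (f g : G) : Prop :=
  ∀ (Y : Type) [TopologicalSpace Y] [T2Space Y] (θ : G → Y),
    Continuous θ → (∀ x h : G, θ (h * x * h⁻¹) = θ x) → θ f = θ g

/-- The conjugacy class of an element of a group. -/
def conjClass (G : Type) [Group G] (h : G) : Set G := {x : G | ∃ k : G, x = k * h * k⁻¹}

/-! A continuous conjugation-invariant map is constant on the closed fibre through `a`, which
contains the conjugacy class of `a` and hence its closure; so meeting closures of conjugacy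
classes forces equal values, and the chain propagates this from `f` to `g`. -/

theorem eq_of_forall_lt_apply_eq_apply_succ {α : Type*} {u : ℕ → α} {N : ℕ}
    (hu : ∀ i < N, u i = u (i + 1)) : u 0 = u N := by
  induction N with
  | zero => rfl
  | succ n ih => exact (ih fun i hi ↦ hu i (by omega)).trans (hu n n.lt_succ_self)

section ConjInvariant

variable {G Y : Type} [Group G] [TopologicalSpace G] [TopologicalSpace Y] [T1Space Y]
  {θ : G → Y}

theorem apply_eq_of_mem_closure_conjClass (hθ : Continuous θ)
    (hinv : ∀ x h : G, θ (h * x * h⁻¹) = θ x) {a y : G} (hy : y ∈ closure (conjClass G a)) :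
    θ y = θ a := by
  have hsub : conjClass G a ⊆ θ ⁻¹' {θ a} := by
    rintro x ⟨k, rfl⟩
    exact hinv a k
  exact (isClosed_singleton.preimage hθ).closure_subset_iff.mpr hsub hy

theorem apply_eq_of_closure_conjClass_inter_nonempty (hθ : Continuous θ)
    (hinv : ∀ x h : G, θ (h * x * h⁻¹) = θ x) {a b : G}
    (hab : (closure (conjClass G a) ∩ closure (conjClass G b)).Nonempty) : θ a = θ b := by
  obtain ⟨y, hya, hyb⟩ := hab
  rw [← apply_eq_of_mem_closure_conjClass hθ hinv hya,
    apply_eq_of_mem_closure_conjClass hθ hinv hyb]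

end ConjInvariant

theorem stmt13_general (G : Type) [Group G] [TopologicalSpace G]
    (f g : G) (N : ℕ) (h : ℕ → G) (h0 : h 0 = f) (hN : h N = g)
    (hchain : ∀ i < N,
      (closure (conjClass G (h i)) ∩ closure (conjClass G (h (i + 1)))).Nonempty) :
    WeaklyConjugate G f g := by
  intro Y _ _ θ hθ hinv
  subst h0 hN
  exact eq_of_forall_lt_apply_eq_apply_succ fun i hi ↦
    apply_eq_of_closure_conjClass_inter_nonempty hθ hinv (hchain i hi)

/-- Chain criterion for weak conjugacy. -/
theorem stmt13 (G : Type) [Group G] [TopologicalSpace G] [IsTopologicalGroup G]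
    (f g : G) (N : ℕ) (h : ℕ → G) (h0 : h 0 = f) (hN : h N = g)
    (hchain : ∀ i < N,
      (closure (conjClass G (h i)) ∩ closure (conjClass G (h (i + 1)))).Nonempty) :
    WeaklyConjugate G f g :=
  stmt13_general G f g N h h0 hN hchain
end
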